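/- arXiv:math/0105023 — 5 statements merged into one kernel-verified Lean document; each statement's English description precedes it below -/
import Mathlib

section
/- Let A be a finite-dimensional commutative associative real algebra. If every right multiplication operator R_X is nilpotent, then the algebra A is nilpotent, i.e., there exists n such that every product of n elements of A vanishes. -/
/-!
The right multiplications `R_X` pairwise commute (`R_X R_Y = R_{YX}` and `A` is commutative),
so they generate a commutative subalgebra `B` of the finite-dimensional algebra `End A`.
`B` is Noetherian, so its nilradical is a nilpotent ideal, say of exponent `n`; since every
`R_X` lies in that nilradical, any product of `n` right multiplications vanishes, and hence
so does every product of `n + 1` elements of `A`.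
-/

theorem Ideal.list_prod_mem_pow {R : Type*} [CommSemiring R] {I : Ideal R} {l : List R}
    (hl : ∀ x ∈ l, x ∈ I) : l.prod ∈ I ^ l.length := by
  induction l with
  | nil => simp
  | cons a l ih =>
    rw [List.prod_cons, List.length_cons, pow_succ']
    exact Ideal.mul_mem_mul (hl a List.mem_cons_self)
      (ih fun x hx => hl x (List.mem_cons_of_mem a hx))

theorem IsNoetherianRing.exists_list_prod_eq_zero_of_isNilpotent (R : Type*) [CommSemiring R]
    [IsNoetherianRing R] :
    ∃ n : ℕ, ∀ l : List R, l.length = n → (∀ x ∈ l, IsNilpotent x) → l.prod = 0 := by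
  obtain ⟨n, hn⟩ := IsNoetherianRing.isNilpotent_nilradical R
  refine ⟨n, fun l hlen hl => ?_⟩
  have hmem : l.prod ∈ nilradical R ^ l.length :=
    Ideal.list_prod_mem_pow fun x hx => mem_nilradical.2 (hl x hx)
  rwa [hlen, hn, Ideal.zero_eq_bot, Ideal.mem_bot] at hmem

open scoped IsMulCommutative in
theorem Algebra.exists_list_prod_map_eq_zero_of_commute_of_isNilpotent {K E ι : Type*}
    [CommRing K] [IsNoetherianRing K] [Ring E] [Algebra K E] [Module.Finite K E] (f : ι → E)
    (hcomm : ∀ i j, Commute (f i) (f j)) (hnil : ∀ i, IsNilpotent (f i)) :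
    ∃ n : ℕ, ∀ l : List ι, l.length = n → (l.map f).prod = 0 := by
  let B := Algebra.adjoin K (Set.range f)
  have : IsMulCommutative B := Algebra.isMulCommutative_adjoin K <| by
    rintro _ ⟨i, rfl⟩ _ ⟨j, rfl⟩
    exact hcomm i j
  have : IsNoetherianRing B :=
    isNoetherian_of_tower K (inferInstanceAs (IsNoetherian K (Subalgebra.toSubmodule B)))
  let g : ι → B := fun i => ⟨f i, Algebra.subset_adjoin (Set.mem_range_self i)⟩
  have hg : ∀ i, IsNilpotent (g i) := fun i =>
    (IsNilpotent.map_iff (f := B.val) Subtype.val_injective).1 (hnil i)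
  obtain ⟨n, hn⟩ := IsNoetherianRing.exists_list_prod_eq_zero_of_isNilpotent B
  refine ⟨n, fun l hlen => ?_⟩
  have hprod : (l.map g).prod = 0 :=
    hn _ (by rw [List.length_map, hlen]) (by simpa using fun i _ => hg i)
  calc (l.map f).prod = B.val (l.map g).prod := by rw [map_list_prod, List.map_map]; rfl
    _ = 0 := by rw [hprod, map_zero]

theorem Module.End.foldl_eq_prod_map_reverse_apply {R M ι : Type*} [Semiring R]
    [AddCommMonoid M] [Module R M] (f : ι → Module.End R M) (l : List ι) (x : M) :
    l.foldl (fun y i => f i y) x = (l.reverse.map f).prod x := by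
  induction l generalizing x with
  | nil => rfl
  | cons i l ih =>
    rw [List.foldl_cons, ih, List.reverse_cons, List.map_append, List.prod_append]
    simp

/-- A finite-dimensional commutative associative real algebra all of whose
right multiplication operators are nilpotent is a nilpotent algebra:
some `n ≥ 1` exists such that every product of `n` elements vanishes. -/
theorem stmt_2 (A : Type*) [AddCommGroup A] [Module ℝ A] [FiniteDimensional ℝ A]
    (mul : A →ₗ[ℝ] A →ₗ[ℝ] A)
    (hcomm : ∀ X Y : A, mul X Y = mul Y X)
    (hassoc : ∀ X Y Z : A, mul (mul X Y) Z = mul X (mul Y Z))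
    (hnil : ∀ X : A, IsNilpotent (mul.flip X)) :
    ∃ n : ℕ, 1 ≤ n ∧ ∀ (x : A) (l : List A), l.length = n - 1 →
      l.foldl (fun acc b => mul acc b) x = 0 := by
  have hmul_flip : ∀ X Y : A, mul.flip X * mul.flip Y = mul.flip (mul Y X) := fun X Y => by
    ext Z
    simp [hassoc]
  have hcommute : ∀ X Y : A, Commute (mul.flip X) (mul.flip Y) := fun X Y => by
    rw [Commute, SemiconjBy, hmul_flip, hmul_flip, hcomm]
  obtain ⟨n, hn⟩ :=
    Algebra.exists_list_prod_map_eq_zero_of_commute_of_isNilpotent (K := ℝ) mul.flip hcommute hnil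
  refine ⟨n + 1, Nat.le_add_left 1 n, fun x l hlen => ?_⟩
  refine (Module.End.foldl_eq_prod_map_reverse_apply mul.flip l x).trans ?_
  rw [hn l.reverse (by rw [List.length_reverse, hlen, Nat.add_sub_cancel])]
  exact LinearMap.zero_apply x
end

section
/- Up to isomorphism there are exactly 6 commutative associative real algebra structures on a 2-dimensional real vector space. -/
/-!
Split on idempotents. If `μ ≠ 0` has no nonzero idempotent, polarization gives `x` with
`y = x² ≠ 0`; then `x, y` is a basis, and a nonzero `xy` or `y²` would produce an idempotent, so
`xy = y² = 0`. If a nonzero idempotent `e` is a unit, completing the square gives `w` independent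
of `e` with `w² = c e`, and rescaling `w` makes `c ∈ {1, -1, 0}`: `ℝ × ℝ`, `ℂ` or the dual
numbers. Otherwise `n = v - ev` satisfies `en = 0` and, by associativity, `n² = δ n`, giving
`ℝ × 0` or `ℝ × ℝ`. The six normal forms are separated by five conjugation invariants: being
zero, `(xy)z ≡ 0`, having a unit, having a nonzero square-zero element, having zero divisors.
-/

/-- A commutative associative algebra structure on `ℝ²`. -/
def IsCommAssoc (μ : (ℝ × ℝ) →ₗ[ℝ] (ℝ × ℝ) →ₗ[ℝ] (ℝ × ℝ)) : Prop :=
  (∀ x y, μ x y = μ y x) ∧ (∀ x y z, μ (μ x y) z = μ x (μ y z))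

/-- Two algebra structures on `ℝ²` are equivalent if they are conjugate under
`GL(2,ℝ)`. -/
def AlgEquivalent (μ ν : (ℝ × ℝ) →ₗ[ℝ] (ℝ × ℝ) →ₗ[ℝ] (ℝ × ℝ)) : Prop :=
  ∃ f : (ℝ × ℝ) ≃ₗ[ℝ] (ℝ × ℝ), ∀ x y, ν x y = f.symm (μ (f x) (f y))

open Module

local notation "Mul₂" => (ℝ × ℝ) →ₗ[ℝ] (ℝ × ℝ) →ₗ[ℝ] (ℝ × ℝ)

section General

variable {K V W : Type*} [Field K] [AddCommGroup V] [Module K V] [AddCommGroup W] [Module K W]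

noncomputable def pairEquiv {u v : V} (h : LinearIndependent K ![u, v]) (hV : finrank K V = 2) :
    (K × K) ≃ₗ[K] V :=
  LinearEquiv.ofBijective
    ((LinearMap.toSpanSingleton K V u).coprod (LinearMap.toSpanSingleton K V v))
    (by
      have hinj : Function.Injective
          ((LinearMap.toSpanSingleton K V u).coprod (LinearMap.toSpanSingleton K V v)) := by
        rw [← LinearMap.ker_eq_bot, LinearMap.ker_eq_bot']
        intro x hx
        obtain ⟨h1, h2⟩ := LinearIndependent.pair_iff.mp h x.1 x.2 (by simpa using hx)
        exact Prod.ext h1 h2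
      have : FiniteDimensional K V := .of_finrank_pos (by omega)
      refine ⟨hinj, (LinearMap.injective_iff_surjective_of_finrank_eq_finrank ?_).mp hinj⟩
      simp [hV])

@[simp] lemma pairEquiv_apply {u v : V} (h : LinearIndependent K ![u, v]) (hV : finrank K V = 2)
    (x : K × K) : pairEquiv h hV x = x.1 • u + x.2 • v := rfl

lemma LinearIndependent.exists_eq_smul_add_smul {u v : V} (h : LinearIndependent K ![u, v])
    (hV : finrank K V = 2) (z : V) : ∃ a b : K, z = a • u + b • v :=
  ⟨((pairEquiv h hV).symm z).1, ((pairEquiv h hV).symm z).2, by simp [← pairEquiv_apply h hV]⟩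

lemma LinearIndependent.pair_smul_right {u v : V} (h : LinearIndependent K ![u, v]) {t : K}
    (ht : t ≠ 0) : LinearIndependent K ![u, t • v] := by
  simpa using (LinearIndependent.pair_add_smul_add_smul_iff (x := u) (y := v) 1 0 0 t).mpr
    ⟨h, by simpa using ht⟩

lemma LinearMap.apply_smul_add_smul_of_comm (μ : V →ₗ[K] V →ₗ[K] W) (hμ : ∀ x y, μ x y = μ y x)
    (u v : V) (a b c d : K) :
    μ (a • u + b • v) (c • u + d • v) =
      (a * c) • μ u u + (a * d + b * c) • μ u v + (b * d) • μ v v := by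
  simp only [map_add, map_smul, LinearMap.add_apply, LinearMap.smul_apply, hμ v u]
  module

lemma LinearMap.eq_zero_of_apply_self_eq_zero [CharZero K] (μ : V →ₗ[K] V →ₗ[K] W)
    (hμ : ∀ x y, μ x y = μ y x) (h : ∀ x, μ x x = 0) : μ = 0 := by
  ext x y
  have hxy := h (x + y)
  simp only [map_add, LinearMap.add_apply, h x, h y, hμ y x, zero_add, add_zero,
    ← two_smul K] at hxy
  simpa using hxy

lemma LinearMap.apply_inv_smul_self {μ : V →ₗ[K] V →ₗ[K] V} {z : V} {t : K} (ht : t ≠ 0)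
    (h : μ z z = t • z) : μ (t⁻¹ • z) (t⁻¹ • z) = t⁻¹ • z := by
  simp only [map_smul, LinearMap.smul_apply, h, smul_smul]
  congr 1
  field_simp

end General

section Table

variable {R M : Type*} [CommRing R] [AddCommGroup M] [Module R M]

def mulOfTable (p q r : M) : (R × R) →ₗ[R] (R × R) →ₗ[R] M :=
  LinearMap.mk₂ R (fun x y => (x.1 * y.1) • p + (x.1 * y.2 + x.2 * y.1) • q + (x.2 * y.2) • r)
    (fun _ _ _ => by simp only [Prod.fst_add, Prod.snd_add]; module)
    (fun _ _ _ => by simp only [Prod.smul_fst, Prod.smul_snd, smul_eq_mul]; module)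
    (fun _ _ _ => by simp only [Prod.fst_add, Prod.snd_add]; module)
    (fun _ _ _ => by simp only [Prod.smul_fst, Prod.smul_snd, smul_eq_mul]; module)

@[simp] lemma mulOfTable_apply (p q r : M) (x y : R × R) :
    mulOfTable p q r x y = (x.1 * y.1) • p + (x.1 * y.2 + x.2 * y.1) • q + (x.2 * y.2) • r := rfl

end Table

lemma finrank_real_prod : finrank ℝ (ℝ × ℝ) = 2 := by simp

lemma algEquivalent_mulOfTable {μ : Mul₂} (hμ : ∀ x y, μ x y = μ y x) {u v : ℝ × ℝ}
    (h : LinearIndependent ℝ ![u, v]) {p q r : ℝ × ℝ}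
    (hp : μ u u = p.1 • u + p.2 • v) (hq : μ u v = q.1 • u + q.2 • v)
    (hr : μ v v = r.1 • u + r.2 • v) : AlgEquivalent μ (mulOfTable p q r) := by
  refine ⟨pairEquiv h finrank_real_prod, fun x y => ?_⟩
  rw [LinearEquiv.eq_symm_apply]
  simp only [pairEquiv_apply]
  rw [LinearMap.apply_smul_add_smul_of_comm μ hμ, hp, hq, hr, mulOfTable_apply]
  simp only [Prod.fst_add, Prod.snd_add, Prod.smul_fst, Prod.smul_snd, smul_eq_mul]
  module

section Classification

variable {μ : Mul₂} (hcomm : ∀ x y, μ x y = μ y x)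
include hcomm

lemma exists_pair_mul_self_eq_smul_of_unit {e : ℝ × ℝ} (he : ∀ x, μ e x = x) :
    ∃ w : ℝ × ℝ, ∃ c : ℝ, LinearIndependent ℝ ![e, w] ∧ μ w w = c • e := by
  have he0 : e ≠ 0 := fun h => by simpa [h, Prod.ext_iff] using he (1, 0)
  obtain ⟨v, hv⟩ :=
    exists_linearIndependent_pair_of_one_lt_finrank (by rw [finrank_real_prod]; norm_num) he0
  obtain ⟨γ, δ, hvv⟩ := hv.exists_eq_smul_add_smul finrank_real_prod (μ v v)
  -- complete the square: `(v - δ/2 e)² = (γ + δ²/4) e`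
  refine ⟨(-(δ / 2)) • e + v, γ + δ ^ 2 / 4,
    (LinearIndependent.pair_add_smul_right_iff _).mpr hv, ?_⟩
  simp only [map_add, map_smul, LinearMap.add_apply, LinearMap.smul_apply, he, hcomm v e, hvv]
  module

lemma exists_pair_mul_self_eq_sign_of_unit {e : ℝ × ℝ} (he : ∀ x, μ e x = x) :
    ∃ w : ℝ × ℝ, ∃ c ∈ ({1, -1, 0} : Set ℝ), LinearIndependent ℝ ![e, w] ∧ μ w w = c • e := by
  obtain ⟨w, c, hind, hww⟩ := exists_pair_mul_self_eq_smul_of_unit hcomm he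
  rcases eq_or_ne c 0 with rfl | hc
  · exact ⟨w, 0, by simp, hind, hww⟩
  have hs : 0 < √|c| := by positivity
  refine ⟨(√|c|)⁻¹ • w, c / |c|, ?_, hind.pair_smul_right (inv_ne_zero hs.ne'), ?_⟩
  · rcases hc.lt_or_gt with h | h <;> simp [abs_of_neg, abs_of_pos, h, h.ne, h.ne']
  · simp only [map_smul, LinearMap.smul_apply, hww, smul_smul]
    congr 1
    field_simp
    rw [Real.sq_sqrt (abs_nonneg c)]

lemma algEquivalent_of_unit {e : ℝ × ℝ} (he : ∀ x, μ e x = x) :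
    AlgEquivalent μ (mulOfTable (1, 0) 0 (0, 1)) ∨
      AlgEquivalent μ (mulOfTable (1, 0) (0, 1) (-1, 0)) ∨
      AlgEquivalent μ (mulOfTable (1, 0) (0, 1) 0) := by
  obtain ⟨w, c, hc, hind, hww⟩ := exists_pair_mul_self_eq_sign_of_unit hcomm he
  have hee := he e
  have hew := he w
  rcases hc with rfl | rfl | rfl
  · left
    -- `(e ± w) / 2` are orthogonal idempotents
    have hind' : LinearIndependent ℝ
        ![(1 / 2 : ℝ) • e + (1 / 2 : ℝ) • w, (1 / 2 : ℝ) • e + (-(1 / 2) : ℝ) • w] :=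
      LinearIndependent.pair_add_smul_add_smul_iff _ _ _ _ |>.mpr ⟨hind, by norm_num⟩
    apply algEquivalent_mulOfTable hcomm hind' <;>
      simp only [LinearMap.apply_smul_add_smul_of_comm μ hcomm, hee, hew, hww, Prod.fst_zero,
        Prod.snd_zero] <;> module
  · right; left
    exact algEquivalent_mulOfTable hcomm hind (by simp [hee]) (by simp [hew]) (by simp [hww])
  · right; right
    exact algEquivalent_mulOfTable hcomm hind (by simp [hee]) (by simp [hew]) (by simp [hww])

variable (hassoc : ∀ x y z, μ (μ x y) z = μ x (μ y z))
include hassoc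

lemma algEquivalent_of_idempotent_of_not_unit {e v : ℝ × ℝ} (he0 : e ≠ 0) (hee : μ e e = e)
    (hv : μ e v ≠ v) :
    AlgEquivalent μ (mulOfTable (1, 0) 0 0) ∨ AlgEquivalent μ (mulOfTable (1, 0) 0 (0, 1)) := by
  set n := v - μ e v with hn
  have hn0 : n ≠ 0 := sub_ne_zero.mpr (Ne.symm hv)
  have hen : μ e n = 0 := by rw [hn, map_sub, ← hassoc, hee, sub_self]
  have hind : LinearIndependent ℝ ![e, n] := by
    refine LinearIndependent.pair_iff.mpr fun s t hst => ?_
    have hs : s • e = 0 := by simpa [hee, hen] using congr_arg (μ e) hst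
    obtain rfl : s = 0 := (smul_eq_zero.mp hs).resolve_right he0
    exact ⟨rfl, (smul_eq_zero.mp (by simpa using hst)).resolve_right hn0⟩
  obtain ⟨γ, δ, hnn⟩ := hind.exists_eq_smul_add_smul finrank_real_prod (μ n n)
  obtain rfl : γ = 0 := by
    have : μ e (μ n n) = 0 := by rw [← hassoc, hen, map_zero, LinearMap.zero_apply]
    simpa [hnn, hee, hen, he0] using this
  rcases eq_or_ne δ 0 with rfl | hδ
  · left
    exact algEquivalent_mulOfTable hcomm hind (by simp [hee]) (by simp [hen]) (by simp [hnn])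
  · right
    refine algEquivalent_mulOfTable hcomm (hind.pair_smul_right (inv_ne_zero hδ)) (by simp [hee])
      (by simp [hen]) ?_
    simpa using LinearMap.apply_inv_smul_self hδ (by simpa using hnn)

lemma algEquivalent_of_forall_idempotent_eq_zero (hμ : μ ≠ 0) (hid : ∀ e, μ e e = e → e = 0) :
    AlgEquivalent μ (mulOfTable (0, 1) 0 0) := by
  obtain ⟨x, hxx⟩ : ∃ x, μ x x ≠ 0 := by
    by_contra! h
    exact hμ (LinearMap.eq_zero_of_apply_self_eq_zero μ hcomm h)
  obtain ⟨y, hy⟩ : ∃ y, μ x x = y := ⟨_, rfl⟩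
  rw [hy] at hxx
  have hx0 : x ≠ 0 := by rintro rfl; exact hxx (by simpa using hy.symm)
  have hind : LinearIndependent ℝ ![x, y] := by
    refine (LinearIndependent.pair_iff' hx0).mpr fun a hax => hx0 ?_
    have ha : a ≠ 0 := by rintro rfl; exact hxx (by simpa using hax.symm)
    simpa [ha] using hid _ (LinearMap.apply_inv_smul_self ha (hy.trans hax.symm))
  obtain ⟨α, β, hxy⟩ := hind.exists_eq_smul_add_smul finrank_real_prod (μ x y)
  have hyy : μ y y = α • y + β • μ x y :=
    calc μ y y = μ (μ x x) y := by rw [hy]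
      _ = α • y + β • μ x y := by rw [hassoc, hxy, map_add, map_smul, map_smul, hy, hxy]
  -- otherwise `(y - β x) / α` is a nonzero idempotent
  obtain rfl : α = 0 := by
    by_contra hα
    have := hid ((-(β / α)) • x + α⁻¹ • y) (by
      rw [LinearMap.apply_smul_add_smul_of_comm μ hcomm, hy, hyy, hxy]
      match_scalars <;> field_simp <;> ring)
    simpa [hα] using (LinearIndependent.pair_iff.mp hind _ _ this).2
  obtain rfl : β = 0 := by
    by_contra hβ
    have := hid _ (LinearMap.apply_inv_smul_self (pow_ne_zero 2 hβ) (t := β ^ 2) (by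
      rw [hyy, hxy]; module))
    exact hxx (by simpa [hβ] using this)
  simp only [zero_smul, zero_add] at hxy hyy
  exact algEquivalent_mulOfTable hcomm hind (by simp [hy]) (by simp [hxy]) (by simp [hyy])

end Classification

/-- Structure constants `(e₁², e₁e₂, e₂²)` of the zero algebra, `xℝ[x]/(x³)`, `ℝ × 0`, `ℝ × ℝ`,
`ℂ` and the dual numbers `ℝ[ε]/(ε²)`. -/
noncomputable def normalForm : Fin 6 → Mul₂ :=
  ![mulOfTable 0 0 0, mulOfTable (0, 1) 0 0, mulOfTable (1, 0) 0 0, mulOfTable (1, 0) 0 (0, 1),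
    mulOfTable (1, 0) (0, 1) (-1, 0), mulOfTable (1, 0) (0, 1) 0]

lemma isCommAssoc_normalForm (i : Fin 6) : IsCommAssoc (normalForm i) := by
  refine ⟨fun x y => ?_, fun x y z => ?_⟩ <;> fin_cases i <;> ext <;> simp [normalForm] <;> ring

lemma normalForm_eq_zero_iff (i : Fin 6) : normalForm i = 0 ↔ i = 0 := by
  refine ⟨fun h => ?_, by rintro rfl; ext <;> simp [normalForm]⟩
  have := LinearMap.congr_fun₂ h (1, 0) (1, 0)
  fin_cases i <;> simp [normalForm] at this ⊢

lemma normalForm_mul_mul_eq_zero_iff (i : Fin 6) :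
    (∀ x y z, normalForm i (normalForm i x y) z = 0) ↔ i ≤ 1 := by
  refine ⟨fun h => ?_, fun hi x y z => ?_⟩
  · have := h (1, 0) (1, 0) (1, 0)
    fin_cases i <;> simp_all [normalForm]
  · fin_cases i <;> simp_all [normalForm]

lemma normalForm_exists_unit_iff (i : Fin 6) : (∃ e, ∀ x, normalForm i e x = x) ↔ 3 ≤ i := by
  refine ⟨fun ⟨e, he⟩ => ?_, fun hi => ?_⟩
  · have := he (0, 1)
    fin_cases i <;> simp [normalForm, Prod.ext_iff] at this ⊢
  · fin_cases i <;> simp at hi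
    exacts [⟨(1, 1), by simp [normalForm]⟩, ⟨(1, 0), by simp [normalForm]⟩,
      ⟨(1, 0), by simp [normalForm]⟩]

lemma normalForm_four_apply (x y : ℝ × ℝ) :
    normalForm 4 x y =
      Complex.equivRealProdLm
        (Complex.equivRealProdLm.symm x * Complex.equivRealProdLm.symm y) := by
  ext <;> simp [normalForm, Complex.equivRealProdLm]
  ring

lemma normalForm_four_eq_zero {x y : ℝ × ℝ} (h : normalForm 4 x y = 0) : x = 0 ∨ y = 0 := by
  rw [normalForm_four_apply, LinearEquiv.map_eq_zero_iff, mul_eq_zero] at h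
  simpa using h

lemma normalForm_exists_mul_self_eq_zero_iff (i : Fin 6) :
    (∃ x ≠ 0, normalForm i x x = 0) ↔ i ≠ 3 ∧ i ≠ 4 := by
  refine ⟨fun ⟨x, hx, h⟩ => ⟨?_, ?_⟩, fun hi => ⟨(0, 1), by simp, ?_⟩⟩
  · rintro rfl
    simp [normalForm, Prod.ext_iff] at h
    exact hx (Prod.ext h.1 h.2)
  · rintro rfl
    simpa [hx] using normalForm_four_eq_zero h
  · fin_cases i <;> simp_all [normalForm]

lemma normalForm_exists_mul_eq_zero_iff (i : Fin 6) :
    (∃ x ≠ 0, ∃ y ≠ 0, normalForm i x y = 0) ↔ i ≠ 4 := by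
  refine ⟨?_, fun hi => ?_⟩
  · rintro ⟨x, hx, y, hy, h⟩ rfl
    exact (normalForm_four_eq_zero h).elim hx hy
  by_cases h3 : i = 3
  · exact ⟨(1, 0), by simp, (0, 1), by simp, by simp [h3, normalForm]⟩
  obtain ⟨x, hx, h⟩ := (normalForm_exists_mul_self_eq_zero_iff i).mpr ⟨h3, hi⟩
  exact ⟨x, hx, x, hx, h⟩

section Invariants

variable {μ ν : Mul₂}

lemma AlgEquivalent.symm (h : AlgEquivalent μ ν) : AlgEquivalent ν μ := by
  obtain ⟨f, hf⟩ := h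
  exact ⟨f.symm, fun x y => by simp [hf]⟩

lemma AlgEquivalent.eq_zero (h : AlgEquivalent μ ν) (hμ : μ = 0) : ν = 0 := by
  obtain ⟨f, hf⟩ := h
  ext <;> simp [hf, hμ]

lemma AlgEquivalent.mul_mul_eq_zero (h : AlgEquivalent μ ν) (hμ : ∀ x y z, μ (μ x y) z = 0) :
    ∀ x y z, ν (ν x y) z = 0 := by
  obtain ⟨f, hf⟩ := h
  intro x y z
  simp [hf, hμ]

lemma AlgEquivalent.exists_unit (h : AlgEquivalent μ ν) (hμ : ∃ e, ∀ x, μ e x = x) :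
    ∃ e, ∀ x, ν e x = x := by
  obtain ⟨f, hf⟩ := h
  obtain ⟨e, he⟩ := hμ
  exact ⟨f.symm e, fun x => by simp [hf, he]⟩

lemma AlgEquivalent.exists_mul_self_eq_zero (h : AlgEquivalent μ ν) (hμ : ∃ x ≠ 0, μ x x = 0) :
    ∃ x ≠ 0, ν x x = 0 := by
  obtain ⟨f, hf⟩ := h
  obtain ⟨x, hx, hxx⟩ := hμ
  exact ⟨f.symm x, by simpa using hx, by simp [hf, hxx]⟩

lemma AlgEquivalent.exists_mul_eq_zero (h : AlgEquivalent μ ν)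
    (hμ : ∃ x ≠ 0, ∃ y ≠ 0, μ x y = 0) : ∃ x ≠ 0, ∃ y ≠ 0, ν x y = 0 := by
  obtain ⟨f, hf⟩ := h
  obtain ⟨x, hx, y, hy, hxy⟩ := hμ
  exact ⟨f.symm x, by simpa using hx, f.symm y, by simpa using hy, by simp [hf, hxy]⟩

end Invariants

lemma not_algEquivalent_normalForm {i j : Fin 6} (hij : i ≠ j) :
    ¬ AlgEquivalent (normalForm i) (normalForm j) := by
  intro h
  have transfer {P : Mul₂ → Prop} (hP : ∀ {μ ν}, AlgEquivalent μ ν → P μ → P ν) :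
      P (normalForm i) ↔ P (normalForm j) :=
    ⟨hP h, hP h.symm⟩
  have h₀ := transfer AlgEquivalent.eq_zero
  have h₁ := transfer AlgEquivalent.mul_mul_eq_zero
  have h₂ := transfer AlgEquivalent.exists_unit
  have h₃ := transfer AlgEquivalent.exists_mul_self_eq_zero
  have h₄ := transfer AlgEquivalent.exists_mul_eq_zero
  simp only [normalForm_eq_zero_iff, normalForm_mul_mul_eq_zero_iff, normalForm_exists_unit_iff,
    normalForm_exists_mul_self_eq_zero_iff, normalForm_exists_mul_eq_zero_iff] at h₀ h₁ h₂ h₃ h₄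
  omega

lemma exists_algEquivalent_normalForm {μ : Mul₂} (hμ : IsCommAssoc μ) :
    ∃ i, AlgEquivalent μ (normalForm i) := by
  obtain ⟨hcomm, hassoc⟩ := hμ
  by_cases hid : ∀ e, μ e e = e → e = 0
  · by_cases h0 : μ = 0
    · exact ⟨0, LinearEquiv.refl ℝ _, fun x y => by simp [h0, normalForm]⟩
    · exact ⟨1, algEquivalent_of_forall_idempotent_eq_zero hcomm hassoc h0 hid⟩
  push Not at hid
  obtain ⟨e, hee, he0⟩ := hid
  by_cases hunit : ∀ x, μ e x = x
  · rcases algEquivalent_of_unit hcomm hunit with h | h | h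
    exacts [⟨3, h⟩, ⟨4, h⟩, ⟨5, h⟩]
  push Not at hunit
  obtain ⟨v, hv⟩ := hunit
  rcases algEquivalent_of_idempotent_of_not_unit hcomm hassoc he0 hee hv with h | h
  exacts [⟨2, h⟩, ⟨3, h⟩]

/-- Up to isomorphism there are exactly 6 commutative associative real algebra
structures on a 2-dimensional real vector space. -/
theorem stmt_5 :
    ∃ reps : Fin 6 → ((ℝ × ℝ) →ₗ[ℝ] (ℝ × ℝ) →ₗ[ℝ] (ℝ × ℝ)),
      (∀ i, IsCommAssoc (reps i)) ∧
      (∀ i j, i ≠ j → ¬ AlgEquivalent (reps i) (reps j)) ∧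
      (∀ μ, IsCommAssoc μ → ∃ i, AlgEquivalent μ (reps i)) :=
  ⟨normalForm, isCommAssoc_normalForm, fun _ _ => not_algEquivalent_normalForm,
    fun _ => exists_algEquivalent_normalForm⟩
end

section
/- The algebra R × R has trivial symmetric second Hochschild (Harrison) cohomology: every symmetric bilinear cocycle φ on R × R with values in R × R is a coboundary. -/
/-- Every symmetric Hochschild (Harrison) 2-cocycle on the real algebra `(ℝ × ℝ)`
is a coboundary. -/
theorem stmt_7 (φ : (ℝ × ℝ) →ₗ[ℝ] (ℝ × ℝ) →ₗ[ℝ] (ℝ × ℝ))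
    (hsymm : ∀ x y : (ℝ × ℝ), φ x y = φ y x)
    (hcocycle : ∀ x y z : (ℝ × ℝ),
      x * φ y z - φ (x * y) z - φ x y * z + φ x (y * z) = 0) :
    ∃ f : (ℝ × ℝ) →ₗ[ℝ] (ℝ × ℝ), ∀ x y : (ℝ × ℝ), φ x y = x * f y + f x * y - f (x * y) := by
  set A : ℝ × ℝ := φ (1,0) (1,0) with hA
  set B : ℝ × ℝ := φ (1,0) (0,1) with hB
  set C : ℝ × ℝ := φ (0,1) (0,1) with hC
  -- constraint 1 : B.2 + A.2 = 0
  have h1 : B.2 + A.2 = 0 := by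
    have h := congrArg Prod.snd (hcocycle (1,0) (1,0) (0,1))
    have e0 : ((1:ℝ),(0:ℝ)) * ((0:ℝ),(1:ℝ)) = (0 : ℝ × ℝ) := by
      simp [Prod.ext_iff]
    have e1 : ((1:ℝ),(0:ℝ)) * ((1:ℝ),(0:ℝ)) = ((1:ℝ),(0:ℝ)) := by
      simp [Prod.ext_iff]
    rw [e1, e0, map_zero] at h
    simp [Prod.mul_def, ← hA, ← hB] at h
    linarith
  -- constraint 2 : C.1 + B.1 = 0
  have h2 : C.1 + B.1 = 0 := by
    have h := congrArg Prod.fst (hcocycle (0,1) (0,1) (1,0))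
    have e0 : ((0:ℝ),(1:ℝ)) * ((1:ℝ),(0:ℝ)) = (0 : ℝ × ℝ) := by
      simp [Prod.ext_iff]
    have e1 : ((0:ℝ),(1:ℝ)) * ((0:ℝ),(1:ℝ)) = ((0:ℝ),(1:ℝ)) := by
      simp [Prod.ext_iff]
    rw [e1, e0, map_zero] at h
    simp [Prod.mul_def, ← hB, ← hC, hsymm (0,1) (1,0)] at h
    linarith
  -- expansion of φ on the basis
  have hexp : ∀ x y : ℝ × ℝ,
      φ x y = (x.1*y.1) • A + (x.1*y.2 + x.2*y.1) • B + (x.2*y.2) • C := by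
    rintro ⟨a, b⟩ ⟨c, d⟩
    have hx : ((a, b) : ℝ × ℝ) = a • (1,0) + b • (0,1) := by
      simp [Prod.ext_iff]
    have hy : ((c, d) : ℝ × ℝ) = c • (1,0) + d • (0,1) := by
      simp [Prod.ext_iff]
    show φ (a, b) (c, d) = (a*c) • A + (a*d + b*c) • B + (b*d) • C
    rw [hx, hy]
    simp only [map_add, map_smul, LinearMap.add_apply, LinearMap.smul_apply,
      hsymm (0,1) (1,0), ← hA, ← hB, ← hC]
    module
  -- explicit primitive
  refine ⟨{
    toFun := fun x => (x.1 * A.1 + x.2 * B.1, -(x.1 * A.2) + x.2 * C.2)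
    map_add' := by intro x y; simp [Prod.ext_iff]; constructor <;> ring
    map_smul' := by intro c x; simp [Prod.ext_iff, smul_eq_mul]; constructor <;> ring }, ?_⟩
  intro x y
  rw [hexp x y]
  refine Prod.ext ?_ ?_ <;>
    simp [Prod.mul_def, smul_eq_mul]
  · linear_combination (x.2 * y.2) * h2
  · linear_combination (x.1 * y.2 + x.2 * y.1) * h1
end

section
/- For the 2-dimensional real algebra with basis e₁, e₂ and sole nonzero product e₁·e₁ = e₂ (the nilpotent algebra μ₄), the space of symmetric Harrison 2-cocycles modulo coboundaries is nonzero. -/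
/-!
A coboundary satisfies `δf(e₁, e₁) ≡ -f(e₂)` modulo `e₂` and `δf(e₁, e₂) = e₁ · f(e₂)`,
so the `e₁`-coordinate of `f(e₂)` is pinned down twice. The symmetric cocycle with
`φ(e₁, e₁) = e₁`, zero on the other basis pairs, demands `f(e₂)₁ = -1` from the first
identity and `f(e₂)₁ = 0` from the second.
-/

/-- The product of the nilpotent algebra `μ₄` on `ℝ²`: `e₁ · e₁ = e₂` and all
other basis products vanish. -/
def mu4 (x y : ℝ × ℝ) : ℝ × ℝ := (0, x.1 * y.1)

def mu4Cocycle : (ℝ × ℝ) →ₗ[ℝ] (ℝ × ℝ) →ₗ[ℝ] (ℝ × ℝ) :=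
  LinearMap.mk₂ ℝ (fun x y => (x.1 * y.1, 0))
    (fun x x' y => by ext <;> simp [add_mul])
    (fun c x y => by ext <;> simp [mul_assoc])
    (fun x y y' => by ext <;> simp [mul_add])
    (fun c x y => by ext <;> simp [mul_left_comm])

@[simp]
lemma mu4Cocycle_apply (x y : ℝ × ℝ) : mu4Cocycle x y = (x.1 * y.1, 0) := rfl

lemma mu4Cocycle_comm (x y : ℝ × ℝ) : mu4Cocycle x y = mu4Cocycle y x := by
  simp [mul_comm]

lemma mu4Cocycle_isCocycle (x y z : ℝ × ℝ) :
    mu4 x (mu4Cocycle y z) - mu4Cocycle (mu4 x y) z - mu4 (mu4Cocycle x y) z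
      + mu4Cocycle x (mu4 y z) = 0 := by
  -- `μ₄` lands in `ℝ e₂`, where `φ` vanishes; the two outer terms are both `x₁ y₁ z₁ e₂`.
  simp [mu4, Prod.ext_iff, mul_assoc]

lemma mu4_coboundary_e₁_e₁_fst (f : (ℝ × ℝ) →ₗ[ℝ] (ℝ × ℝ)) :
    (mu4 (1, 0) (f (1, 0)) + mu4 (f (1, 0)) (1, 0) - f (mu4 (1, 0) (1, 0))).1
      = -(f (0, 1)).1 := by
  simp [mu4]

lemma mu4_coboundary_e₁_e₂_snd (f : (ℝ × ℝ) →ₗ[ℝ] (ℝ × ℝ)) :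
    (mu4 (1, 0) (f (0, 1)) + mu4 (f (1, 0)) (0, 1) - f (mu4 (1, 0) (0, 1))).2
      = (f (0, 1)).1 := by
  have hf0 : f (0, 0) = 0 := f.map_zero
  simp [mu4, hf0]

lemma mu4Cocycle_not_coboundary :
    ¬ ∃ f : (ℝ × ℝ) →ₗ[ℝ] (ℝ × ℝ),
        ∀ x y, mu4Cocycle x y = mu4 x (f y) + mu4 (f x) y - f (mu4 x y) := by
  rintro ⟨f, hf⟩
  have h₁₁ : 1 = -(f (0, 1)).1 := by
    simpa using congrArg Prod.fst (hf (1, 0) (1, 0)) |>.trans (mu4_coboundary_e₁_e₁_fst f)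
  have h₁₂ : 0 = (f (0, 1)).1 := by
    simpa using congrArg Prod.snd (hf (1, 0) (0, 1)) |>.trans (mu4_coboundary_e₁_e₂_snd f)
  linarith

/-- For the 2-dimensional nilpotent algebra `μ₄`, the symmetric Harrison second
cohomology is nonzero: there is a symmetric 2-cocycle which is not a
coboundary. -/
theorem stmt_8 :
    ∃ φ : (ℝ × ℝ) →ₗ[ℝ] (ℝ × ℝ) →ₗ[ℝ] (ℝ × ℝ),
      (∀ x y, φ x y = φ y x) ∧
      (∀ x y z, mu4 x (φ y z) - φ (mu4 x y) z - mu4 (φ x y) z + φ x (mu4 y z) = 0) ∧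
      ¬ ∃ f : (ℝ × ℝ) →ₗ[ℝ] (ℝ × ℝ),
          ∀ x y, φ x y = mu4 x (f y) + mu4 (f x) y - f (mu4 x y) :=
  ⟨mu4Cocycle, mu4Cocycle_comm, mu4Cocycle_isCocycle, mu4Cocycle_not_coboundary⟩
end

section
/- On the 3-dimensional Heisenberg Lie algebra h₃ with basis X₁,X₂,X₃ and bracket [X₁,X₂]=X₃, the bilinear product defined by X₁·X₁ = a X₁ + a X₂ + α X₃, X₁·X₂ = a X₁ + a X₂ + β X₃, X₂·X₁ = a X₁ + a X₂ + (β−1) X₃, X₂·X₂ = a X₁ + a X₂ + (α+1) X₃ (all other products with X₃ zero), for real parameters a, α, β with a ≠ 0, is a left symmetric product that is not complete: there exists X such that tr(R_X) ≠ 0. -/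
/-- The product on the Heisenberg Lie algebra `h₃` (basis `X₁ = 0, X₂ = 1,
X₃ = 2`) given by `X₁·X₁ = aX₁ + aX₂ + αX₃`, `X₁·X₂ = aX₁ + aX₂ + βX₃`,
`X₂·X₁ = aX₁ + aX₂ + (β−1)X₃`, `X₂·X₂ = aX₁ + aX₂ + (α+1)X₃`, all products
with `X₃` zero. -/
def heisMul (a α β : ℝ) (x y : Fin 3 → ℝ) : Fin 3 → ℝ :=
  ![a * (x 0 + x 1) * (y 0 + y 1),
    a * (x 0 + x 1) * (y 0 + y 1),
    α * x 0 * y 0 + β * x 0 * y 1 + (β - 1) * x 1 * y 0 + (α + 1) * x 1 * y 1]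

/-- The Heisenberg bracket `[X₁, X₂] = X₃`. -/
def heisBr (x y : Fin 3 → ℝ) : Fin 3 → ℝ :=
  ![0, 0, x 0 * y 1 - x 1 * y 0]

/-- For `a ≠ 0`, the product `heisMul a α β` is a left symmetric product on the
Heisenberg Lie algebra which is not complete: some right multiplication
operator has nonzero trace. -/
theorem stmt_17 (a α β : ℝ) (ha : a ≠ 0) :
    (∀ x y z, heisMul a α β x (heisMul a α β y z) - heisMul a α β y (heisMul a α β x z)
      = heisMul a α β (heisMul a α β x y) z - heisMul a α β (heisMul a α β y x) z) ∧
    (∀ x y, heisMul a α β x y - heisMul a α β y x = heisBr x y) ∧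
    (∃ X : Fin 3 → ℝ, (∑ i : Fin 3, heisMul a α β (Pi.single i 1) X i) ≠ 0) := by
  refine ⟨?_, ?_, ?_⟩
  · intro x y z
    funext i
    fin_cases i <;>
      simp [heisMul, Pi.sub_apply, Matrix.cons_val_zero, Matrix.cons_val_one,
        Matrix.head_cons] <;> ring
  · intro x y
    funext i
    fin_cases i <;>
      simp [heisMul, heisBr, Pi.sub_apply] <;> ring
  · refine ⟨Pi.single 0 1, ?_⟩
    have h : (∑ i : Fin 3, heisMul a α β (Pi.single i 1) (Pi.single 0 1) i)
        = 2 * a := by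
      simp [Fin.sum_univ_three, heisMul, Pi.single_apply]
      ring
    rw [h]
    intro h2
    apply ha
    linarith
end
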